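/- arXiv:2601.18742 — 6 statements merged into one kernel-verified Lean document; each statement's English description precedes it below -/
import Mathlib

section
/- Let H = K ⋊_α Γ be a semidirect product of groups and let F ⊆ H be a finite subset of cardinality n, say F = {(k₁,g₁),…,(k_n,g_n)}. Set F₂ = {e, g₁, …, g_n} ⊆ Γ and F₁ = {α(g)(k_i) : 1 ≤ i ≤ n, g ∈ F₂} ⊆ K. Let ε > 0, let (G,d) be a group with a bi-invariant metric, and let σ : H → G be a map such that: (i) for all k, k' ∈ F₁ with kk' ∈ F₁, d(σ(kk',1), σ(k,1)σ(k',1)) < ε/6; (ii) for all g, g' ∈ F₂ with gg' ∈ F₂, d(σ(1,gg'), σ(1,g)σ(1,g')) < ε/6; (iii) for all k ∈ F₁, g ∈ F₂, d(σ(k,g), σ(k,1)σ(1,g)) < ε/6; (iv) for all k ∈ F₁, g ∈ F₂, d(σ(1,g)σ(k,1), σ(α(g)(k),1)σ(1,g)) < ε/6. Then for all x, y ∈ F with xy ∈ F, d(σ(xy), σ(x)σ(y)) < ε. -/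
/-- Hayes–Sale type lemma: approximate multiplicativity of a map on a semidirect product
follows from approximate multiplicativity on the factors together with approximate
compatibility conditions. -/
theorem stmt4 {K Γ G : Type*} [Group K] [Group Γ] [Group G]
    [DecidableEq K] [DecidableEq Γ]
    (φa : Γ →* MulAut K) (d : G → G → ℝ)
    (hd_eq : ∀ g h : G, d g h = 0 ↔ g = h)
    (hd_symm : ∀ g h : G, d g h = d h g)
    (hd_tri : ∀ a b c : G, d a c ≤ d a b + d b c)
    (hd_bi : ∀ k g h : G, d (k * g) (k * h) = d g h ∧ d (g * k) (h * k) = d g h)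
    (F : Finset (K ⋊[φa] Γ)) (ε : ℝ) (hε : 0 < ε)
    (F₂ : Finset Γ) (hF₂ : F₂ = insert 1 (F.image SemidirectProduct.right))
    (F₁ : Finset K) (hF₁ : F₁ = (F₂ ×ˢ F).image (fun p => φa p.1 p.2.left))
    (σ : K ⋊[φa] Γ → G)
    (hi : ∀ k ∈ F₁, ∀ k' ∈ F₁, k * k' ∈ F₁ →
      d (σ ⟨k * k', 1⟩) (σ ⟨k, 1⟩ * σ ⟨k', 1⟩) < ε / 6)
    (hii : ∀ g ∈ F₂, ∀ g' ∈ F₂, g * g' ∈ F₂ →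
      d (σ ⟨1, g * g'⟩) (σ ⟨1, g⟩ * σ ⟨1, g'⟩) < ε / 6)
    (hiii : ∀ k ∈ F₁, ∀ g ∈ F₂, d (σ ⟨k, g⟩) (σ ⟨k, 1⟩ * σ ⟨1, g⟩) < ε / 6)
    (hiv : ∀ k ∈ F₁, ∀ g ∈ F₂,
      d (σ ⟨1, g⟩ * σ ⟨k, 1⟩) (σ ⟨φa g k, 1⟩ * σ ⟨1, g⟩) < ε / 6) :
    ∀ x ∈ F, ∀ y ∈ F, x * y ∈ F → d (σ (x * y)) (σ x * σ y) < ε := by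
  intro x hx y hy hxy
  have h1 : (1 : Γ) ∈ F₂ := by simp [hF₂]
  have hmem₂ : ∀ z ∈ F, z.right ∈ F₂ := by
    intro z hz
    rw [hF₂]
    exact Finset.mem_insert_of_mem (Finset.mem_image_of_mem _ hz)
  have hmem₁ : ∀ g ∈ F₂, ∀ z ∈ F, φa g z.left ∈ F₁ := by
    intro g hg z hz
    rw [hF₁]
    exact Finset.mem_image.2 ⟨(g, z), Finset.mem_product.2 ⟨hg, hz⟩, rfl⟩
  have hmemL : ∀ z ∈ F, z.left ∈ F₁ := by
    intro z hz
    have := hmem₁ 1 h1 z hz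
    simpa using this
  have key : ∀ a a' b b' : G, d (a * b) (a' * b') ≤ d a a' + d b b' := by
    intro a a' b b'
    calc d (a * b) (a' * b') ≤ d (a * b) (a' * b) + d (a' * b) (a' * b') := hd_tri _ _ _
      _ = d a a' + d b b' := by rw [(hd_bi b a a').2, (hd_bi a' b b').1]
  set k := x.left with hkdef
  set g := x.right with hgdef
  set k' := y.left with hk'def
  set g' := y.right with hg'def
  have hk : k ∈ F₁ := hmemL x hx
  have hk' : k' ∈ F₁ := hmemL y hy
  have hgF : g ∈ F₂ := hmem₂ x hx
  have hg'F : g' ∈ F₂ := hmem₂ y hy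
  have hgk' : φa g k' ∈ F₁ := hmem₁ g hgF y hy
  have hxyl : (x * y).left = k * φa g k' := rfl
  have hxyr : (x * y).right = g * g' := rfl
  have hkk' : k * φa g k' ∈ F₁ := by
    have := hmemL _ hxy
    rwa [hxyl] at this
  have hgg : g * g' ∈ F₂ := by
    have := hmem₂ _ hxy
    rwa [hxyr] at this
  have hxeq : x = (⟨k, g⟩ : K ⋊[φa] Γ) := rfl
  have hyeq : y = (⟨k', g'⟩ : K ⋊[φa] Γ) := rfl
  have hxyeq : x * y = (⟨k * φa g k', g * g'⟩ : K ⋊[φa] Γ) := rfl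
  set A := σ ⟨k, 1⟩
  set Ag := σ ⟨φa g k', 1⟩
  set A' := σ ⟨k', 1⟩
  set B := σ ⟨1, g⟩
  set B' := σ ⟨1, g'⟩
  have d1 : d (σ (x * y)) (σ ⟨k * φa g k', 1⟩ * σ ⟨1, g * g'⟩) < ε / 6 := by
    rw [hxyeq]; exact hiii _ hkk' _ hgg
  have d2 : d (σ ⟨k * φa g k', 1⟩ * σ ⟨1, g * g'⟩) ((A * Ag) * (B * B')) < ε / 6 + ε / 6 := by
    calc d (σ ⟨k * φa g k', 1⟩ * σ ⟨1, g * g'⟩) ((A * Ag) * (B * B'))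
        ≤ d (σ ⟨k * φa g k', 1⟩) (A * Ag) + d (σ ⟨1, g * g'⟩) (B * B') := key _ _ _ _
      _ < ε / 6 + ε / 6 := by
          exact add_lt_add (hi _ hk _ hgk' hkk') (hii _ hgF _ hg'F hgg)
  have d3 : d ((A * Ag) * (B * B')) ((A * B) * (A' * B')) < ε / 6 := by
    have he1 : (A * Ag) * (B * B') = (A * (Ag * B)) * B' := by group
    have he2 : (A * B) * (A' * B') = (A * (B * A')) * B' := by group
    rw [he1, he2, (hd_bi B' _ _).2, (hd_bi A _ _).1, hd_symm]
    exact hiv _ hk' _ hgF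
  have d4 : d ((A * B) * (A' * B')) (σ x * σ y) < ε / 6 + ε / 6 := by
    calc d ((A * B) * (A' * B')) (σ x * σ y)
        ≤ d (A * B) (σ x) + d (A' * B') (σ y) := key _ _ _ _
      _ < ε / 6 + ε / 6 := by
          rw [hd_symm (A * B), hd_symm (A' * B')]
          exact add_lt_add (by rw [hxeq]; exact hiii _ hk _ hgF)
            (by rw [hyeq]; exact hiii _ hk' _ hg'F)
  calc d (σ (x * y)) (σ x * σ y)
      ≤ d (σ (x * y)) (σ ⟨k * φa g k', 1⟩ * σ ⟨1, g * g'⟩)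
        + d (σ ⟨k * φa g k', 1⟩ * σ ⟨1, g * g'⟩) ((A * Ag) * (B * B'))
        + d ((A * Ag) * (B * B')) ((A * B) * (A' * B'))
        + d ((A * B) * (A' * B')) (σ x * σ y) := by
          have t1 := hd_tri (σ (x * y)) (σ ⟨k * φa g k', 1⟩ * σ ⟨1, g * g'⟩) (σ x * σ y)
          have t2 := hd_tri (σ ⟨k * φa g k', 1⟩ * σ ⟨1, g * g'⟩) ((A * Ag) * (B * B')) (σ x * σ y)
          have t3 := hd_tri ((A * Ag) * (B * B')) ((A * B) * (A' * B')) (σ x * σ y)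
          linarith
    _ < ε := by linarith
end

section
/- Suppose a group Γ admits a faithful LEF action on a set X. Then Γ is a LEF group. -/
/-- A group is LEF if every finite subset admits an injective partial homomorphism into
a finite group. -/
def IsLEF (G : Type*) [Group G] : Prop :=
  ∀ A : Finset G, ∃ (Q : Type) (_ : Group Q) (_ : Fintype Q) (φ : G → Q),
    Set.InjOn φ ↑A ∧ ∀ g ∈ A, ∀ h ∈ A, g * h ∈ A → φ (g * h) = φ g * φ h

/-- If a group `Γ` admits a faithful LEF action on a set `X`, then `Γ` is a LEF group. -/
theorem stmt14 {Γ X : Type*} [Group Γ] (α : Γ →* Equiv.Perm X)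
    (hfaithful : Function.Injective α)
    (hLEFaction : ∀ (F : Finset Γ) (Z : Finset X),
      ∃ (Q : Type) (_ : Group Q) (_ : Fintype Q)
        (Y : Type) (_ : Fintype Y) (β : Q →* Equiv.Perm Y) (ρ : Γ → Q) (π : X → Y),
          Set.InjOn π ↑Z ∧
          (∀ g ∈ F, ∀ h ∈ F, g * h ∈ F → ρ (g * h) = ρ g * ρ h) ∧
          (∀ g ∈ F, ∀ x ∈ Z, α g x ∈ Z → π (α g x) = β (ρ g) (π x))) :
    IsLEF Γ := by
  classical
  intro A
  -- witness set: for each pair (g,h) with α g ≠ α h, a point separating them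
  set W : Finset X := (A ×ˢ A).biUnion (fun p =>
    if h : ∃ x, α p.1 x ≠ α p.2 x then {h.choose} else (∅ : Finset X)) with hWdef
  set Z : Finset X := W ∪ A.biUnion (fun g => W.image (α g)) with hZdef
  obtain ⟨Q, _, _, Y, _, β, ρ, π, hπinj, hρmul, hcompat⟩ := hLEFaction A Z
  refine ⟨Q, ‹_›, ‹_›, ρ, ?_, hρmul⟩
  intro g hg h hh hρeq
  by_contra hne
  have hex : ∃ x, α g x ≠ α h x := by
    by_contra hc
    push_neg at hc
    exact hne (hfaithful (Equiv.ext hc))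
  set x := hex.choose with hxdef
  have hx : α g x ≠ α h x := hex.choose_spec
  have hxW : x ∈ W := by
    rw [hWdef]
    refine Finset.mem_biUnion.mpr ⟨(g, h), Finset.mem_product.mpr ⟨hg, hh⟩, ?_⟩
    rw [dif_pos hex]
    exact Finset.mem_singleton_self _
  have hxZ : x ∈ Z := by rw [hZdef]; exact Finset.mem_union_left _ hxW
  have hgxZ : α g x ∈ Z := by
    rw [hZdef]
    exact Finset.mem_union_right _ (Finset.mem_biUnion.mpr
      ⟨g, hg, Finset.mem_image_of_mem _ hxW⟩)
  have hhxZ : α h x ∈ Z := by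
    rw [hZdef]
    exact Finset.mem_union_right _ (Finset.mem_biUnion.mpr
      ⟨h, hh, Finset.mem_image_of_mem _ hxW⟩)
  have h1 : π (α g x) = π (α h x) := by
    rw [hcompat g hg x hxZ hgxZ, hcompat h hh x hxZ hhxZ, hρeq]
  exact hx (hπinj hgxZ hhxZ h1)
end

section
/- Suppose a group Γ has a finite-index subgroup Δ which is LEF. Then Γ is LEF. -/
/-- Wreath-product type: the underlying set of `Q ≀ Sym(X)`. -/
structure Wr (X Q : Type) where
  f : X → Q
  p : Equiv.Perm X

namespace Wr

variable {X Q : Type} [Group Q]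

instance : One (Wr X Q) := ⟨⟨1, 1⟩⟩
instance : Mul (Wr X Q) := ⟨fun a b => ⟨fun x => a.f (b.p x) * b.f x, a.p * b.p⟩⟩
instance : Inv (Wr X Q) := ⟨fun a => ⟨fun x => (a.f (a.p⁻¹ x))⁻¹, a.p⁻¹⟩⟩

@[simp] lemma mul_f (a b : Wr X Q) (x : X) : (a * b).f x = a.f (b.p x) * b.f x := rfl
@[simp] lemma mul_p (a b : Wr X Q) : (a * b).p = a.p * b.p := rfl
@[simp] lemma one_f (x : X) : (1 : Wr X Q).f x = 1 := rfl
@[simp] lemma one_p : (1 : Wr X Q).p = 1 := rfl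
@[simp] lemma inv_f (a : Wr X Q) (x : X) : a⁻¹.f x = (a.f (a.p⁻¹ x))⁻¹ := rfl
@[simp] lemma inv_p (a : Wr X Q) : a⁻¹.p = a.p⁻¹ := rfl

lemma ext' {a b : Wr X Q} (h1 : a.f = b.f) (h2 : a.p = b.p) : a = b := by
  cases a; cases b; cases h1; cases h2; rfl

instance : Group (Wr X Q) :=
  Group.ofLeftAxioms
    (fun a b c => by
      refine ext' (funext fun x => ?_) (mul_assoc _ _ _)
      simp [mul_assoc])
    (fun a => ext' (funext fun x => by simp) (one_mul _))
    (fun a => ext' (funext fun x => by simp) (inv_mul_cancel _))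

noncomputable instance [Fintype X] [Fintype Q] : Fintype (Wr X Q) := by
  classical
  exact Fintype.ofEquiv ((X → Q) × Equiv.Perm X)
    { toFun := fun ab => ⟨ab.1, ab.2⟩
      invFun := fun w => (w.f, w.p)
      left_inv := fun _ => rfl
      right_inv := fun _ => rfl }

end Wr

/-- If a group `Γ` has a finite-index subgroup `Δ` which is LEF, then `Γ` is LEF. -/
theorem stmt15 {Γ : Type*} [Group Γ] (Δ : Subgroup Γ) (hfi : Δ.FiniteIndex)
    (hΔ : IsLEF Δ) : IsLEF Γ := by
  classical
  haveI := hfi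
  haveI : Fintype (Γ ⧸ Δ) := Fintype.ofFinite _
  intro A
  -- the Kaluzhnin–Krasner cocycle
  have hc : ∀ (g : Γ) (x : Γ ⧸ Δ), (g • x).out⁻¹ * g * x.out ∈ Δ := by
    intro g x
    have h1 : QuotientGroup.mk (g • x.out) = g • x := MulAction.Quotient.mk_smul_out Δ g x
    have h2 : QuotientGroup.mk ((g • x).out) = g • x := QuotientGroup.out_eq' _
    have := QuotientGroup.eq.mp (h2.trans h1.symm)
    simpa [smul_eq_mul, mul_assoc] using this
  let c : Γ → Γ ⧸ Δ → Δ := fun g x => ⟨(g • x).out⁻¹ * g * x.out, hc g x⟩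
  have cocycle : ∀ (g h : Γ) (x : Γ ⧸ Δ), c (g * h) x = c g (h • x) * c h x := by
    intro g h x
    apply Subtype.ext
    show ((g * h) • x).out⁻¹ * (g * h) * x.out
      = ((g • h • x).out⁻¹ * g * (h • x).out) * ((h • x).out⁻¹ * h * x.out)
    rw [mul_smul]
    group
  have recover : ∀ (g : Γ) (x : Γ ⧸ Δ), g = (g • x).out * (c g x : Γ) * x.out⁻¹ := by
    intro g x
    show g = (g • x).out * ((g • x).out⁻¹ * g * x.out) * x.out⁻¹
    group
  -- apply LEF of Δ to the finite set of cocycle values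
  let B : Finset Δ := (A ×ˢ (Finset.univ : Finset (Γ ⧸ Δ))).image fun gx => c gx.1 gx.2
  obtain ⟨Q, _, _, φ, hinj, hmul⟩ := hΔ B
  have hmem : ∀ g ∈ A, ∀ x : Γ ⧸ Δ, c g x ∈ B := by
    intro g hg x
    exact Finset.mem_image.mpr ⟨(g, x), Finset.mem_product.mpr ⟨hg, Finset.mem_univ _⟩, rfl⟩
  -- transport the finite quotient to `Fin n` to stay in `Type 0`
  obtain e : Γ ⧸ Δ ≃ Fin (Fintype.card (Γ ⧸ Δ)) := Fintype.equivFin _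
  refine ⟨Wr (Fin (Fintype.card (Γ ⧸ Δ))) Q, inferInstance, inferInstance,
    fun g => ⟨fun i => φ (c g (e.symm i)), e.permCongr (MulAction.toPerm g)⟩, ?_, ?_⟩
  · -- injectivity on A
    intro g hg h hh heq
    have hf : ∀ i, φ (c g (e.symm i)) = φ (c h (e.symm i)) := fun i =>
      congrFun (congrArg Wr.f heq) i
    have hp : e.permCongr (MulAction.toPerm g) = e.permCongr (MulAction.toPerm h) :=
      congrArg Wr.p heq
    set x₀ : Γ ⧸ Δ := QuotientGroup.mk 1
    have hcx : c g x₀ = c h x₀ := by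
      have := hf (e x₀)
      rw [Equiv.symm_apply_apply] at this
      exact hinj (hmem g hg x₀) (hmem h hh x₀) this
    have hsx : g • x₀ = h • x₀ := by
      have := congrFun (congrArg (fun (p : Equiv.Perm _) => (p : _ → _)) hp) (e x₀)
      simp only [Equiv.permCongr_apply, Equiv.symm_apply_apply,
        MulAction.toPerm_apply] at this
      exact e.injective this
    rw [recover g x₀, recover h x₀, hcx, hsx]
  · -- partial multiplicativity on A
    intro g hg h hh hgh
    refine Wr.ext' (funext fun i => ?_) ?_
    · show φ (c (g * h) (e.symm i))
        = φ (c g (e.symm (e.permCongr (MulAction.toPerm h) i))) * φ (c h (e.symm i))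
      simp only [Equiv.permCongr_apply, Equiv.symm_apply_apply, MulAction.toPerm_apply]
      rw [cocycle g h (e.symm i)]
      exact hmul _ (hmem g hg _) _ (hmem h hh _)
        (cocycle g h (e.symm i) ▸ hmem (g * h) hgh (e.symm i))
    · show e.permCongr (MulAction.toPerm (g * h))
        = e.permCongr (MulAction.toPerm g) * e.permCongr (MulAction.toPerm h)
      ext i
      simp [mul_smul]
end

section
/- Let Γ be a group, X a set, α an action of Γ on X, and Sym_f(X) the group of finitely supported permutations of X, on which Γ acts by α̂(g)(σ) = α(g)·σ·α(g)⁻¹. The symmetric enrichment S(Γ,X) = Sym_f(X) ⋊_α̂ Γ is residually finite if and only if Γ is residually finite and X is finite. -/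
/-- The subgroup `Sym_f(X)` of finitely supported permutations of a set `X`. -/
def symF (X : Type*) : Subgroup (Equiv.Perm X) where
  carrier := {σ | {x | σ x ≠ x}.Finite}
  one_mem' := by
    show {x : X | (1 : Equiv.Perm X) x ≠ x}.Finite
    have h : {x : X | (1 : Equiv.Perm X) x ≠ x} = ∅ := by ext x; simp
    rw [h]; exact Set.finite_empty
  mul_mem' := by
    intro a b ha hb
    show {x | (a * b) x ≠ x}.Finite
    apply (ha.union hb).subset
    intro x hx
    simp only [Set.mem_setOf_eq, Set.mem_union, Equiv.Perm.coe_mul, Function.comp_apply] at hx ⊢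
    by_contra hcon
    push_neg at hcon
    exact hx (by rw [hcon.2, hcon.1])
  inv_mem' := by
    intro a ha
    show {x | a⁻¹ x ≠ x}.Finite
    apply ha.subset
    intro x hx
    simp only [Set.mem_setOf_eq] at hx ⊢
    intro h
    exact hx (by nth_rewrite 1 [← h]; simp)

lemma conj_mem_symF {X : Type*} (ρ : Equiv.Perm X) {σ : Equiv.Perm X} (hσ : σ ∈ symF X) :
    ρ * σ * ρ⁻¹ ∈ symF X := by
  apply (hσ.image ρ).subset
  intro x hx
  simp only [Set.mem_setOf_eq, Equiv.Perm.coe_mul, Function.comp_apply] at hx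
  refine ⟨ρ⁻¹ x, ?_, by simp⟩
  simp only [Set.mem_setOf_eq]
  intro h
  exact hx (by rw [h]; simp)

/-- Conjugation action of `Sym(X)` on the subgroup of finitely supported permutations. -/
def conjAutF {X : Type*} : Equiv.Perm X →* MulAut (symF X) where
  toFun ρ :=
    { toFun := fun σ => ⟨ρ * σ * ρ⁻¹, conj_mem_symF ρ σ.2⟩
      invFun := fun σ => ⟨ρ⁻¹ * σ * ρ, by simpa using conj_mem_symF ρ⁻¹ σ.2⟩
      left_inv := fun σ => by ext; simp [mul_assoc]
      right_inv := fun σ => by ext; simp [mul_assoc]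
      map_mul' := fun a b => by ext; simp [mul_assoc] }
  map_one' := by ext σ; simp
  map_mul' := fun ρ₁ ρ₂ => by ext σ; simp [mul_assoc]

/-- A group is residually finite if every nontrivial element survives in some finite
quotient. -/
def ResiduallyFinite (G : Type*) [Group G] : Prop :=
  ∀ g : G, g ≠ 1 → ∃ (Q : Type) (_ : Group Q) (_ : Finite Q) (f : G →* Q), f g ≠ 1

/-!
If `X` is infinite, a homomorphism from `Sym_f(X)` to a finite group identifies two of
infinitely many disjoint 3-cycles `c_i`, `c_j`. A transposition inside the support of `c_i`
inverts `c_i` and commutes with `c_j`, so their common image `x` satisfies `x = x⁻¹` and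
`x ^ 3 = 1`, hence `x = 1`. All these 3-cycles are conjugate, so every finite quotient kills a
fixed one. Conversely, for finite `X` the map `(σ, g) ↦ (σ α(g), g)` embeds the semidirect
product into the residually finite group `Sym(X) × Γ`.
-/

namespace ResiduallyFinite

theorem of_injective {G H : Type*} [Group G] [Group H] (hH : ResiduallyFinite H) (f : G →* H)
    (hf : Function.Injective f) : ResiduallyFinite G := fun g hg => by
  obtain ⟨Q, _, _, q, hq⟩ := hH (f g) ((map_ne_one_iff f hf).mpr hg)
  exact ⟨Q, ‹_›, ‹_›, q.comp f, hq⟩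

theorem of_finite (G : Type*) [Group G] [Finite G] : ResiduallyFinite G := fun g hg =>
  ⟨Shrink.{0} G, _, inferInstance, Shrink.mulEquiv.symm.toMonoidHom, by simpa using hg⟩

theorem prod {G H : Type*} [Group G] [Group H] (hG : ResiduallyFinite G)
    (hH : ResiduallyFinite H) : ResiduallyFinite (G × H) := by
  intro x hx
  by_cases h₁ : x.1 = 1
  · obtain ⟨Q, _, _, q, hq⟩ := hH x.2 fun h₂ => hx (Prod.ext h₁ h₂)
    exact ⟨Q, ‹_›, ‹_›, q.comp (MonoidHom.snd G H), hq⟩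
  · obtain ⟨Q, _, _, q, hq⟩ := hG x.1 h₁
    exact ⟨Q, ‹_›, ‹_›, q.comp (MonoidHom.fst G H), hq⟩

end ResiduallyFinite

theorem SemidirectProduct.injective_prod_rightHom {N G H : Type*} [Group N] [Group G] [Group H]
    {φ : G →* MulAut N} (f : N ⋊[φ] G →* H) (hf : Function.Injective (f.comp inl)) :
    Function.Injective (f.prod rightHom) := by
  refine (injective_iff_map_eq_one _).mpr fun x hx => ?_
  obtain ⟨hfx, hx₂ : x.right = 1⟩ := Prod.mk_eq_one.mp hx
  have hx₁ : x.left = 1 := (injective_iff_map_eq_one _).mp hf _ <| by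
    rw [MonoidHom.comp_apply, ← mul_one (inl x.left), ← map_one inr, ← hx₂,
      inl_left_mul_inr_right, hfx]
  rw [← inl_left_mul_inr_right x, hx₁, hx₂, map_one, map_one, one_mul]

theorem eq_one_of_conj_eq_inv_of_commute {Q : Type*} [Group Q] {x y : Q}
    (hconj : y * x * y⁻¹ = x⁻¹) (hcomm : Commute y x) (hx : x ^ 3 = 1) : x = 1 := by
  have hsq : x * x = 1 := by
    rw [hcomm.eq, mul_inv_cancel_right] at hconj
    exact mul_eq_one_iff_eq_inv.mpr hconj
  rw [pow_succ, pow_two, hsq, one_mul] at hx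
  exact hx

theorem exists_map_eq_one_of_conj_eq_inv {G Q : Type*} [Group G] [Group Q] [Finite Q]
    (f : G →* Q) (c τ : ℕ → G) (hc : ∀ i, c i ^ 3 = 1)
    (hτc : ∀ i, τ i * c i * (τ i)⁻¹ = (c i)⁻¹) (hτ : ∀ i j, i ≠ j → Commute (τ i) (c j)) :
    ∃ i, f (c i) = 1 := by
  obtain ⟨i, j, hij, hfij⟩ := Finite.exists_ne_map_eq_of_infinite (f ∘ c)
  refine ⟨i, eq_one_of_conj_eq_inv_of_commute (y := f (τ i)) ?_ ?_
    (by rw [← map_pow, hc, map_one])⟩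
  · rw [← map_inv, ← map_inv, ← map_mul, ← map_mul, hτc]
  · have hfij : f (c i) = f (c j) := hfij
    rw [hfij]
    exact (hτ i j hij).map f

open Equiv

section Perm

variable {X : Type*} [DecidableEq X]

-- The 3-cycle `a ↦ b ↦ c ↦ a`.
def cycle3 (a b c : X) : Perm X := swap a b * swap b c

theorem conj_cycle3 (ρ : Perm X) (a b c : X) :
    ρ * cycle3 a b c * ρ⁻¹ = cycle3 (ρ a) (ρ b) (ρ c) := by
  rw [cycle3, cycle3, swap_apply_apply, swap_apply_apply]
  group

theorem cycle3_apply_left (a b c : X) (hab : a ≠ b) (hac : a ≠ c) : cycle3 a b c a = b := by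
  simp [cycle3, swap_apply_of_ne_of_ne hab hac]

theorem cycle3_swap_right {a b c : X} (hab : a ≠ b) (hac : a ≠ c) (hbc : b ≠ c) :
    cycle3 a c b = (cycle3 a b c)⁻¹ := by
  rw [eq_inv_iff_mul_eq_one]
  ext x
  simp only [cycle3, Perm.mul_apply, Perm.one_apply, swap_apply_def]
  split_ifs <;> simp_all

theorem cycle3_mul_self {a b c : X} (hab : a ≠ b) (hac : a ≠ c) (hbc : b ≠ c) :
    cycle3 a b c * cycle3 a b c = cycle3 a c b := by
  ext x
  simp only [cycle3, Perm.mul_apply, swap_apply_def]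
  split_ifs <;> simp_all

theorem cycle3_pow_three {a b c : X} (hab : a ≠ b) (hac : a ≠ c) (hbc : b ≠ c) :
    cycle3 a b c ^ 3 = 1 := by
  rw [pow_succ, pow_two, cycle3_mul_self hab hac hbc, cycle3_swap_right hab hac hbc,
    inv_mul_cancel]

theorem swap_apply_embedding_of_ne {ι : Type*} (e : ι ↪ X) {i j k : ι} (hi : k ≠ i)
    (hj : k ≠ j) : swap (e i) (e j) (e k) = e k :=
  swap_apply_of_ne_of_ne (e.injective.ne hi) (e.injective.ne hj)

theorem swap_mem_symF (a b : X) : swap a b ∈ symF X :=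
  (Set.toFinite {a, b}).subset fun x hx => by
    by_contra h
    simp only [Set.mem_insert_iff, Set.mem_singleton_iff, not_or] at h
    exact hx (swap_apply_of_ne_of_ne h.1 h.2)

theorem cycle3_mem_symF (a b c : X) : cycle3 a b c ∈ symF X :=
  mul_mem (swap_mem_symF a b) (swap_mem_symF b c)

end Perm

section Blocks

variable {X : Type*} [DecidableEq X] (e : ℕ ↪ X)

def blockCycle (i : ℕ) : symF X :=
  ⟨cycle3 (e (3 * i)) (e (3 * i + 1)) (e (3 * i + 2)), cycle3_mem_symF _ _ _⟩

def blockSwap (i : ℕ) : symF X :=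
  ⟨swap (e (3 * i + 1)) (e (3 * i + 2)), swap_mem_symF _ _⟩

theorem blockCycle_ne_one (i : ℕ) : blockCycle e i ≠ 1 := fun h => by
  have h' := congrArg (fun σ : symF X => (σ : Perm X) (e (3 * i))) h
  simp only [blockCycle, OneMemClass.coe_one, Perm.one_apply] at h'
  rw [cycle3_apply_left _ _ _ (e.injective.ne (by omega)) (e.injective.ne (by omega))] at h'
  exact e.injective.ne (by omega) h'

theorem blockCycle_pow_three (i : ℕ) : blockCycle e i ^ 3 = 1 :=
  Subtype.ext <| cycle3_pow_three (e.injective.ne (by omega)) (e.injective.ne (by omega))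
    (e.injective.ne (by omega))

theorem blockSwap_conj_blockCycle (i : ℕ) :
    blockSwap e i * blockCycle e i * (blockSwap e i)⁻¹ = (blockCycle e i)⁻¹ := by
  apply Subtype.ext
  simp only [blockSwap, blockCycle, Subgroup.coe_mul, Subgroup.coe_inv, conj_cycle3,
    swap_apply_left, swap_apply_right]
  rw [swap_apply_embedding_of_ne e (by omega) (by omega)]
  exact cycle3_swap_right (e.injective.ne (by omega)) (e.injective.ne (by omega))
    (e.injective.ne (by omega))

theorem commute_blockSwap_blockCycle {i j : ℕ} (hij : i ≠ j) :
    Commute (blockSwap e i) (blockCycle e j) := by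
  rw [commute_iff_eq, ← mul_inv_eq_iff_eq_mul]
  apply Subtype.ext
  simp (disch := omega) only [blockSwap, blockCycle, Subgroup.coe_mul, Subgroup.coe_inv,
    conj_cycle3, swap_apply_embedding_of_ne]

theorem isConj_blockCycle_zero (i : ℕ) : IsConj (blockCycle e 0) (blockCycle e i) := by
  rcases eq_or_ne i 0 with rfl | hi
  · exact IsConj.refl _
  refine isConj_iff.mpr ⟨⟨swap (e 0) (e (3 * i)) * swap (e 1) (e (3 * i + 1)) *
    swap (e 2) (e (3 * i + 2)), by simp only [mul_mem, swap_mem_symF]⟩, Subtype.ext ?_⟩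
  simp (disch := omega) only [blockCycle, Subgroup.coe_mul, Subgroup.coe_inv, conj_cycle3,
    Perm.mul_apply, swap_apply_embedding_of_ne, swap_apply_left]

end Blocks

theorem not_residuallyFinite_symF (X : Type*) [Infinite X] : ¬ ResiduallyFinite (symF X) := by
  classical
  intro h
  let e := Infinite.natEmbedding X
  obtain ⟨Q, _, _, f, hf⟩ := h (blockCycle e 0) (blockCycle_ne_one e 0)
  obtain ⟨i, hi⟩ := exists_map_eq_one_of_conj_eq_inv f (blockCycle e) (blockSwap e)
    (blockCycle_pow_three e) (blockSwap_conj_blockCycle e)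
    fun _ _ hij => commute_blockSwap_blockCycle e hij
  have hconj := f.map_isConj (isConj_blockCycle_zero e i)
  rw [hi, isConj_one_left] at hconj
  exact hf hconj

/-- The symmetric enrichment `S(Γ,X) = Sym_f(X) ⋊ Γ` of an action `α` of `Γ` on `X`
(where `Γ` acts on `Sym_f(X)` by conjugation by `α(g)`) is residually finite iff `Γ` is
residually finite and `X` is finite. -/
theorem stmt16 {Γ : Type*} [Group Γ] (X : Type*) (α : Γ →* Equiv.Perm X) :
    ResiduallyFinite (symF X ⋊[conjAutF.comp α] Γ) ↔
      (ResiduallyFinite Γ ∧ Finite X) := by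
  constructor
  · intro h
    refine ⟨h.of_injective _ SemidirectProduct.inr_injective, not_infinite_iff_finite.mp ?_⟩
    intro _
    exact not_residuallyFinite_symF X (h.of_injective _ SemidirectProduct.inl_injective)
  · rintro ⟨hΓ, _⟩
    let ψ := SemidirectProduct.lift (φ := conjAutF.comp α) (symF X).subtype α fun _ => by
      ext; rfl
    refine ((ResiduallyFinite.of_finite _).prod hΓ).of_injective _
      (SemidirectProduct.injective_prod_rightHom ψ ?_)
    rw [SemidirectProduct.lift_comp_inl]
    exact (symF X).subtype_injective
end

section
/- Let Γ be an amenable group, Δ a group, and α : Γ → Aut(Δ) an action by automorphisms. Then for all finite subsets F ⊆ Γ, E ⊆ Δ and ε > 0, there exist a finite set A, a map φ : Γ → Sym(A) with φ(e) = id which is (F,ε)-multiplicative with respect to the normalized Hamming metric, a subset S ⊆ A with |S| > (1−ε)|A|, and injective partial homomorphisms π_s : E → Δ (s ∈ S), such that for all g ∈ F, h ∈ E, s ∈ S, if φ(g)(s) ∈ S and α(g)⁻¹(h) ∈ E then π_{φ(g)(s)}(h) = π_s(α(g)⁻¹(h)). -/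
/-!
Take a Følner set `s` for `F`. Left multiplication by `g ∈ F` maps `s` into itself outside a
small boundary; completing it to a permutation of `s` gives an almost multiplicative map
`Γ → Sym(s)`. On the points `a` that `F` keeps inside `s`, the automorphisms `π_a = α(a⁻¹)`
intertwine it with the action, because `α((g a)⁻¹) = α(a⁻¹) ∘ α(g⁻¹)`.
-/

/-- The normalized Hamming metric on the symmetric group of a finite set. -/
noncomputable def dHam {A : Type*} [Fintype A] [DecidableEq A] (σ τ : Equiv.Perm A) : ℝ :=
  1 - ((Finset.univ.filter fun a => σ a = τ a).card : ℝ) / (Fintype.card A : ℝ)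

/-- The Følner condition, characterizing amenability for discrete groups. -/
def FolnerCondition (Γ : Type*) [Group Γ] [DecidableEq Γ] : Prop :=
  ∀ (F : Finset Γ) (ε : ℝ), 0 < ε → ∃ A : Finset Γ, A.Nonempty ∧
    ∀ g ∈ F, (((A.image fun a => g * a) \ A).card : ℝ) < ε * A.card

open Finset

lemma nat_mul_div_lt {ε : ℝ} (hε : 0 < ε) {m n : ℕ} (hmn : m < n) : m * (ε / n) < ε := by
  have hn : (0 : ℝ) < n := by exact_mod_cast (Nat.zero_le m).trans_lt hmn
  rw [← mul_div_assoc, div_lt_iff₀ hn, mul_comm]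
  exact mul_lt_mul_of_pos_left (by exact_mod_cast hmn) hε

section Hamming

variable {A B : Type*} [Fintype A] [DecidableEq A] [Fintype B] [DecidableEq B]

lemma dHam_eq_card_filter_ne_div [Nonempty A] (σ τ : Equiv.Perm A) :
    dHam σ τ = #(univ.filter fun a => σ a ≠ τ a) / Fintype.card A := by
  have hA : (Fintype.card A : ℝ) ≠ 0 := by positivity
  have hsplit := card_filter_add_card_filter_not (s := univ) fun a => σ a = τ a
  rw [card_univ] at hsplit
  rw [dHam, eq_div_iff hA, sub_mul, one_mul, div_mul_cancel₀ _ hA, ← hsplit]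
  push_cast
  ring

lemma dHam_permCongr (e : A ≃ B) (σ τ : Equiv.Perm A) :
    dHam (e.permCongr σ) (e.permCongr τ) = dHam σ τ := by
  have hcard : #(univ.filter fun b => e.permCongr σ b = e.permCongr τ b)
      = #(univ.filter fun a => σ a = τ a) :=
    card_equiv e.symm fun b => by simp
  rw [dHam, dHam, hcard, Fintype.card_congr e]

end Hamming

namespace Finset

variable {Γ : Type*} [Group Γ] [DecidableEq Γ] {s : Finset Γ}

noncomputable def leftMulPerm (s : Finset Γ) (g : Γ) : Equiv.Perm s :=
  Equiv.extendSubtype (p := fun a : s => g * (a : Γ) ∈ s) (q := fun b : s => g⁻¹ * (b : Γ) ∈ s)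
    { toFun := fun a => ⟨⟨g * a.1, a.2⟩, by simp⟩
      invFun := fun b => ⟨⟨g⁻¹ * b.1, b.2⟩, by simp⟩
      left_inv := fun a => by ext; simp
      right_inv := fun b => by ext; simp }

lemma leftMulPerm_apply_of_mul_mem {g : Γ} {a : s} (ha : g * (a : Γ) ∈ s) :
    (s.leftMulPerm g a : Γ) = g * a := by
  rw [leftMulPerm, Equiv.extendSubtype_apply_of_mem _ a ha]
  rfl

lemma leftMulPerm_one : s.leftMulPerm 1 = 1 :=
  Equiv.ext fun a => Subtype.ext <| by
    simpa using leftMulPerm_apply_of_mul_mem (g := 1) (a := a) (by simp)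

lemma leftMulPerm_mul_apply_of_mul_mem {g h : Γ} {a : s} (ha : h * (a : Γ) ∈ s)
    (hga : g * h * (a : Γ) ∈ s) :
    s.leftMulPerm (g * h) a = s.leftMulPerm g (s.leftMulPerm h a) := by
  have hha := leftMulPerm_apply_of_mul_mem ha
  apply Subtype.ext
  rw [leftMulPerm_apply_of_mul_mem hga, leftMulPerm_apply_of_mul_mem (by rwa [hha, ← mul_assoc]),
    hha, mul_assoc]

def leftMulBoundary (s : Finset Γ) (g : Γ) : Finset s :=
  univ.filter fun a => g * (a : Γ) ∉ s

def leftMulInterior (s F : Finset Γ) : Finset s :=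
  univ.filter fun a => ∀ g ∈ F, g * (a : Γ) ∈ s

lemma card_leftMulBoundary (g : Γ) :
    #(s.leftMulBoundary g) = #((s.image fun a => g * a) \ s) := by
  refine card_nbij (fun a => g * a) (fun a ha => ?_) (fun a _ b _ hab => ?_) (fun x hx => ?_)
  · simp_all [leftMulBoundary]
  · exact Subtype.ext (mul_left_cancel hab)
  · simp only [coe_sdiff, coe_image, Set.mem_sdiff, Set.mem_image, mem_coe] at hx
    obtain ⟨⟨a, ha, rfl⟩, hx⟩ := hx
    exact ⟨⟨a, ha⟩, by simpa [leftMulBoundary] using hx, rfl⟩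

lemma card_filter_leftMulPerm_mul_ne_le (g h : Γ) :
    #(univ.filter fun a => s.leftMulPerm (g * h) a ≠ (s.leftMulPerm g * s.leftMulPerm h) a)
      ≤ #(s.leftMulBoundary h) + #(s.leftMulBoundary (g * h)) := by
  refine (card_le_card fun a ha => ?_).trans (card_union_le _ _)
  simp only [mem_filter, mem_univ, true_and] at ha
  by_contra hgood
  simp only [leftMulBoundary, mem_union, mem_filter, mem_univ, true_and, not_or, not_not] at hgood
  exact ha (leftMulPerm_mul_apply_of_mul_mem hgood.1 hgood.2)

lemma dHam_leftMulPerm_mul_lt (hs : s.Nonempty) {δ : ℝ} {g h : Γ}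
    (hh : (#(s.leftMulBoundary h) : ℝ) < δ * #s)
    (hgh : (#(s.leftMulBoundary (g * h)) : ℝ) < δ * #s) :
    dHam (s.leftMulPerm (g * h)) (s.leftMulPerm g * s.leftMulPerm h) < 2 * δ := by
  have : Nonempty s := hs.to_subtype
  have hcard : (0 : ℝ) < #s := by exact_mod_cast hs.card_pos
  rw [dHam_eq_card_filter_ne_div, Fintype.card_coe, div_lt_iff₀ hcard]
  have hle : (#(univ.filter fun a =>
        s.leftMulPerm (g * h) a ≠ (s.leftMulPerm g * s.leftMulPerm h) a) : ℝ)
      ≤ #(s.leftMulBoundary h) + #(s.leftMulBoundary (g * h)) := by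
    exact_mod_cast card_filter_leftMulPerm_mul_ne_le g h
  linarith

lemma card_le_card_leftMulInterior_add_sum (F : Finset Γ) :
    #s ≤ #(s.leftMulInterior F) + ∑ g ∈ F, #(s.leftMulBoundary g) := by
  calc #s = #(univ : Finset s) := by simp
    _ ≤ #(s.leftMulInterior F ∪ F.biUnion s.leftMulBoundary) :=
        card_le_card fun a _ => by
          by_cases ha : ∀ g ∈ F, g * (a : Γ) ∈ s
          · exact mem_union_left _ (by simpa [leftMulInterior] using ha)
          · push Not at ha
            simpa [leftMulBoundary] using Or.inr ha
    _ ≤ _ := (card_union_le _ _).trans (Nat.add_le_add_left card_biUnion_le _)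

lemma le_card_leftMulInterior {F : Finset Γ} {δ : ℝ}
    (hbd : ∀ g ∈ F, (#(s.leftMulBoundary g) : ℝ) < δ * #s) :
    (1 - #F * δ) * #s ≤ #(s.leftMulInterior F) := by
  have hsum : ∑ g ∈ F, (#(s.leftMulBoundary g) : ℝ) ≤ #F * (δ * #s) := by
    simpa using sum_le_sum fun g hg => (hbd g hg).le
  have hle : (#s : ℝ) ≤ #(s.leftMulInterior F) + ∑ g ∈ F, (#(s.leftMulBoundary g) : ℝ) := by
    exact_mod_cast card_le_card_leftMulInterior_add_sum F
  linarith

end Finset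

/-- Every action by automorphisms of an amenable group `Γ` on a group `Δ` is a sofic
`𝒞`-action, witnessed inside `Δ` itself: for all finite `F ⊆ Γ`, `E ⊆ Δ` and `ε > 0`
there are a finite set `A`, a unital `(F,ε)`-multiplicative map `φ : Γ → Sym(A)`, a
subset `S ⊆ A` with `|S| > (1-ε)|A|`, and injective partial homomorphisms
`π_s : E → Δ` (`s ∈ S`) intertwining `φ` with the action. -/
theorem stmt17 {Γ Δ : Type*} [Group Γ] [Group Δ] [DecidableEq Γ]
    (hΓ : FolnerCondition Γ) (α : Γ →* MulAut Δ)
    (F : Finset Γ) (E : Finset Δ) (ε : ℝ) (hε : 0 < ε) :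
    ∃ (A : Type) (_ : Fintype A) (_ : DecidableEq A)
      (φ : Γ → Equiv.Perm A) (S : Finset A) (π : A → Δ → Δ),
      φ 1 = 1 ∧
      (∀ g ∈ F, ∀ h ∈ F, g * h ∈ F → dHam (φ (g * h)) (φ g * φ h) < ε) ∧
      ((1 - ε) * Fintype.card A < S.card) ∧
      (∀ s ∈ S, Set.InjOn (π s) ↑E ∧
        ∀ h₁ ∈ E, ∀ h₂ ∈ E, h₁ * h₂ ∈ E → π s (h₁ * h₂) = π s h₁ * π s h₂) ∧
      (∀ g ∈ F, ∀ h ∈ E, ∀ s ∈ S, φ g s ∈ S → α g⁻¹ h ∈ E →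
        π (φ g s) h = π s (α g⁻¹ h)) := by
  obtain ⟨δ, hδ, h2δ, hFδ⟩ : ∃ δ : ℝ, 0 < δ ∧ 2 * δ < ε ∧ #F * δ < ε :=
    ⟨ε / (#F + 3 : ℕ), by positivity, by exact_mod_cast nat_mul_div_lt hε (m := 2) (by omega),
      nat_mul_div_lt hε (by omega)⟩
  obtain ⟨s, hs, hFol⟩ := hΓ F δ hδ
  have hbd : ∀ g ∈ F, (#(s.leftMulBoundary g) : ℝ) < δ * #s := fun g hg => by
    simpa only [card_leftMulBoundary] using hFol g hg
  -- `A` has to live in `Type`, so the Følner set is transported to `Fin #s`.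
  let e : s ≃ Fin #s := Fintype.equivFinOfCardEq (Fintype.card_coe s)
  refine ⟨Fin #s, inferInstance, inferInstance, fun g => e.permCongrHom (s.leftMulPerm g),
    (s.leftMulInterior F).map e.toEmbedding, fun a => α (e.symm a : Γ)⁻¹, ?_, ?_, ?_, ?_, ?_⟩
  · show e.permCongrHom (s.leftMulPerm 1) = 1
    rw [leftMulPerm_one, map_one]
  · intro g _ h hh hgh
    rw [← map_mul]
    exact (dHam_permCongr e _ _).trans_lt
      (by linarith [dHam_leftMulPerm_mul_lt hs (hbd h hh) (hbd _ hgh)])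
  · rw [card_map, Fintype.card_fin]
    have hcard : (0 : ℝ) < #s := by exact_mod_cast hs.card_pos
    nlinarith [le_card_leftMulInterior hbd]
  · exact fun _ _ => ⟨(α _).injective.injOn, fun _ _ _ _ _ => map_mul _ _ _⟩
  · intro g hg h _ _ ha _ _
    obtain ⟨a, haF, rfl⟩ := mem_map.1 ha
    have hga : g * (a : Γ) ∈ s := (mem_filter.1 haF).2 g hg
    simp [leftMulPerm_apply_of_mul_mem hga, mul_inv_rev]
end

section
/- Let X = (V,E) be a graph, (H_v)_{v∈V} a family of groups, Y = (V',E') an induced subgraph of X. Let P(H,X) denote the graph product of the H_v over X, i.e. the quotient of the free product ∗_{v∈V} H_v by the normal subgroup generated by commutators [h,k] for h ∈ H_v, k ∈ H_w with (v,w) ∈ E. Then the natural map P(H,Y) → P(H,X) induced by the inclusion Y ↪ X is injective; its image is the subgroup of P(H,X) generated by the images of H_v for v ∈ V'. -/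
/-- The graph product of a family of groups `H v` over a graph with edge relation `E`:
the quotient of the free product by the commutators of elements lying in adjacent
vertex groups. -/
abbrev GraphProduct {V : Type*} (E : V → V → Prop) (H : V → Type*) [∀ v, Group (H v)] :=
  Monoid.CoprodI H ⧸ Subgroup.normalClosure
    {x : Monoid.CoprodI H | ∃ (v w : V) (h : H v) (k : H w), E v w ∧
      x = (Monoid.CoprodI.of h)⁻¹ * (Monoid.CoprodI.of k)⁻¹ *
            Monoid.CoprodI.of h * Monoid.CoprodI.of k}

/-- The canonical map from a vertex group into the graph product. -/
def GraphProduct.of {V : Type*} (E : V → V → Prop) (H : V → Type*) [∀ v, Group (H v)]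
    (v : V) : H v →* GraphProduct E H :=
  (QuotientGroup.mk' _).comp Monoid.CoprodI.of


/-!
A family of homomorphisms `φ v : H v →* G` whose images commute along edges factors through
the graph product, and the image of the induced map is generated by the images of the `φ v`.
This gives `ι : P(H,Y) → P(H,X)` and its image. For injectivity, sending `H v` identically to
itself for `v ∈ V'` and to `1` otherwise gives a retraction `π : P(H,X) → P(H,Y)` with
`π ∘ ι = id`; it is well defined because `Y` is induced: an edge of `X` between two vertices of
`V'` is an edge of `Y`, and every other defining relation involves a vertex group that `π` kills.
-/

theorem inv_mul_inv_mul_mul_eq_one_iff_commute {G : Type*} [Group G] {a b : G} :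
    a⁻¹ * b⁻¹ * a * b = 1 ↔ Commute a b := by
  rw [← Commute.inv_inv_iff, ← commutatorElement_eq_one_iff_commute, commutatorElement_def,
    inv_inv, inv_inv]

namespace GraphProduct

variable {V : Type*} {E : V → V → Prop} {H : V → Type*} [∀ v, Group (H v)] {G : Type*} [Group G]

def lift (φ : ∀ v, H v →* G)
    (hφ : ∀ v w, E v w → ∀ (h : H v) (k : H w), Commute (φ v h) (φ w k)) :
    GraphProduct E H →* G :=
  QuotientGroup.lift _ (Monoid.CoprodI.lift φ) <| by
    refine Subgroup.normalClosure_le_normal ?_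
    rintro _ ⟨v, w, h, k, hvw, rfl⟩
    simp only [SetLike.mem_coe, MonoidHom.mem_ker, map_mul, map_inv, Monoid.CoprodI.lift_of]
    exact inv_mul_inv_mul_mul_eq_one_iff_commute.2 (hφ v w hvw h k)

@[simp]
theorem lift_of (φ : ∀ v, H v →* G)
    (hφ : ∀ v w, E v w → ∀ (h : H v) (k : H w), Commute (φ v h) (φ w k)) (v : V) (h : H v) :
    lift φ hφ (GraphProduct.of E H v h) = φ v h :=
  Monoid.CoprodI.lift_of φ h

theorem of_commute {v w : V} (hvw : E v w) (h : H v) (k : H w) :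
    Commute (GraphProduct.of E H v h) (GraphProduct.of E H w k) :=
  inv_mul_inv_mul_mul_eq_one_iff_commute.1 <|
    (QuotientGroup.eq_one_iff _).2 (Subgroup.subset_normalClosure ⟨v, w, h, k, hvw, rfl⟩)

theorem closure_iUnion_range_of :
    Subgroup.closure (⋃ v, Set.range (GraphProduct.of E H v)) = ⊤ := by
  rw [eq_top_iff]
  rintro x -
  obtain ⟨y, rfl⟩ := QuotientGroup.mk_surjective x
  induction y using Monoid.CoprodI.induction_on with
  | one => exact Subgroup.one_mem _
  | of v h => exact Subgroup.subset_closure (Set.mem_iUnion.2 ⟨v, h, rfl⟩)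
  | mul y z hy hz => exact Subgroup.mul_mem _ hy hz

theorem hom_ext {f g : GraphProduct E H →* G}
    (hfg : ∀ v (h : H v), f (GraphProduct.of E H v h) = g (GraphProduct.of E H v h)) : f = g :=
  QuotientGroup.monoidHom_ext _ (Monoid.CoprodI.ext_hom _ _ fun v => MonoidHom.ext (hfg v))

theorem range_lift (φ : ∀ v, H v →* G)
    (hφ : ∀ v w, E v w → ∀ (h : H v) (k : H w), Commute (φ v h) (φ w k)) :
    (lift φ hφ).range = Subgroup.closure (⋃ v, Set.range (φ v)) := by
  rw [MonoidHom.range_eq_map, ← closure_iUnion_range_of, MonoidHom.map_closure, Set.image_iUnion]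
  simp only [← Set.range_comp]
  congr! with v

section InducedSubgraph

variable (E H) (V' : Set V)

local notation "P'" => GraphProduct (fun a b : V' => E a b) (fun a : V' => H a)

def inclusion : P' →* GraphProduct E H :=
  lift (fun v : V' => GraphProduct.of E H v) fun _ _ hvw => of_commute hvw

open Classical in
noncomputable def restrictionHom (v : V) : H v →* P' :=
  if hv : v ∈ V' then GraphProduct.of _ (fun a : V' => H a) ⟨v, hv⟩ else 1

theorem restrictionHom_commute {v w : V} (hvw : E v w) (h : H v) (k : H w) :
    Commute (restrictionHom E H V' v h) (restrictionHom E H V' w k) := by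
  by_cases hv : v ∈ V'
  · by_cases hw : w ∈ V'
    · simpa [restrictionHom, hv, hw] using
        of_commute (E := fun a b : V' => E a b) (H := fun a : V' => H a)
          (v := ⟨v, hv⟩) (w := ⟨w, hw⟩) hvw h k
    · simp [restrictionHom, hw]
  · simp [restrictionHom, hv]

noncomputable def retraction : GraphProduct E H →* P' :=
  lift (restrictionHom E H V') fun _ _ hvw => restrictionHom_commute E H V' hvw

theorem retraction_comp_inclusion : (retraction E H V').comp (inclusion E H V') = .id _ :=
  hom_ext fun v h => by
    simp only [MonoidHom.comp_apply, inclusion, retraction, lift_of, restrictionHom, dif_pos v.2,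
      MonoidHom.id_apply]

theorem inclusion_injective : Function.Injective (inclusion E H V') :=
  Function.LeftInverse.injective (g := retraction E H V')
    (DFunLike.congr_fun (retraction_comp_inclusion E H V'))

end InducedSubgraph

end GraphProduct

theorem stmt18_general {V : Type*} (E : V → V → Prop)
    (H : V → Type*) [∀ v, Group (H v)] (V' : Set V) :
    ∃ ι : GraphProduct (fun a b : V' => E a b) (fun a : V' => H a) →* GraphProduct E H,
      (∀ (v : V') (h : H v),
        ι (GraphProduct.of (fun a b : V' => E a b) (fun a : V' => H a) v h) =
          GraphProduct.of E H (v : V) h) ∧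
      Function.Injective ι ∧
      MonoidHom.range ι =
        Subgroup.closure (⋃ v : V', Set.range (GraphProduct.of E H (v : V))) :=
  ⟨GraphProduct.inclusion E H V', GraphProduct.lift_of _ _,
    GraphProduct.inclusion_injective E H V', GraphProduct.range_lift _ _⟩

/-- For an induced subgraph `Y` (on a vertex set `V' ⊆ V`) of a graph `X`, the natural
map `P(H,Y) → P(H,X)` of graph products is injective, and its image is the subgroup
generated by the images of the vertex groups `H v`, `v ∈ V'`. -/
theorem stmt18 {V : Type*} (E : V → V → Prop) (hsym : Symmetric E)
    (H : V → Type*) [∀ v, Group (H v)] (V' : Set V) :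
    ∃ ι : GraphProduct (fun a b : V' => E a b) (fun a : V' => H a) →* GraphProduct E H,
      (∀ (v : V') (h : H v),
        ι (GraphProduct.of (fun a b : V' => E a b) (fun a : V' => H a) v h) =
          GraphProduct.of E H (v : V) h) ∧
      Function.Injective ι ∧
      MonoidHom.range ι =
        Subgroup.closure (⋃ v : V', Set.range (GraphProduct.of E H (v : V))) :=
  stmt18_general E H V'
end
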